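/- Let h : ℝ → ℝ be smooth and g_h the metric on ℝ³ with nonzero components g(∂t,∂t) = g(∂x,∂y) = 1, g(∂x,∂x) = -2h(t). Then ∇R(∂t,∂x,∂x,∂t;∂t) = h'''(t) and, up to the usual symmetries, this is the only nonzero entry of the first covariant derivative of the curvature tensor on coordinate frames. -/

import Mathlib

/-- The metric g_h on ℝ³ with coordinates (t,x,y) = (p 0, p 1, p 2). -/
noncomputable def gh (h : ℝ → ℝ) (p : Fin 3 → ℝ) (i j : Fin 3) : ℝ :=
  if i = 0 ∧ j = 0 then 1
  else if (i = 1 ∧ j = 2) ∨ (i = 2 ∧ j = 1) then 1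
  else if i = 1 ∧ j = 1 then -2 * h (p 0) else 0

/-- Christoffel symbols of the Levi-Civita connection of `g`. -/
def IsLeviCivita (g : (Fin 3 → ℝ) → Fin 3 → Fin 3 → ℝ)
    (Γ : (Fin 3 → ℝ) → Fin 3 → Fin 3 → Fin 3 → ℝ) : Prop :=
  (∀ p i j k, Γ p i j k = Γ p j i k) ∧
  (∀ (p : Fin 3 → ℝ) (i j k : Fin 3),
    fderiv ℝ (fun q => g q j k) p (Pi.single i 1) =
      (∑ l, Γ p i j l * g p l k) + (∑ l, Γ p i k l * g p j l))

/-- The (0,4) Riemann curvature tensor on coordinate frames. -/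
noncomputable def Riem (g : (Fin 3 → ℝ) → Fin 3 → Fin 3 → ℝ)
    (Γ : (Fin 3 → ℝ) → Fin 3 → Fin 3 → Fin 3 → ℝ)
    (p : Fin 3 → ℝ) (i j k l : Fin 3) : ℝ :=
  ∑ m, (fderiv ℝ (fun q => Γ q j k m) p (Pi.single i 1)
        - fderiv ℝ (fun q => Γ q i k m) p (Pi.single j 1)
        + ∑ n, (Γ p j k n * Γ p i n m - Γ p i k n * Γ p j n m)) * g p m l

/-- Covariant derivative of a (0,m)-tensor field given by its components,
with the last slot the direction of differentiation. -/
noncomputable def covDer (Γ : (Fin 3 → ℝ) → Fin 3 → Fin 3 → Fin 3 → ℝ) {m : ℕ}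
    (S : (Fin 3 → ℝ) → (Fin m → Fin 3) → ℝ)
    (p : Fin 3 → ℝ) (idx : Fin (m + 1) → Fin 3) : ℝ :=
  fderiv ℝ (fun q => S q (fun a => idx a.castSucc)) p (Pi.single (idx (Fin.last m)) 1)
    - ∑ a : Fin m, ∑ n : Fin 3,
        Γ p (idx (Fin.last m)) (idx a.castSucc) n *
          S p (Function.update (fun b => idx b.castSucc) a n)

/-- The components of ∇ᵏR. -/
noncomputable def nablaR (g : (Fin 3 → ℝ) → Fin 3 → Fin 3 → ℝ)
    (Γ : (Fin 3 → ℝ) → Fin 3 → Fin 3 → Fin 3 → ℝ) :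
    (k : ℕ) → (Fin 3 → ℝ) → (Fin (4 + k) → Fin 3) → ℝ
  | 0 => fun p idx => Riem g Γ p (idx 0) (idx 1) (idx 2) (idx 3)
  | k + 1 => covDer Γ (nablaR g Γ k)

/-! ### Auxiliary machinery -/

lemma diff_eval0 {f : ℝ → ℝ} {p : Fin 3 → ℝ} (hf : DifferentiableAt ℝ f (p 0)) :
    DifferentiableAt ℝ (fun q : Fin 3 → ℝ => f (q 0)) p :=
  hf.comp p (ContinuousLinearMap.proj (R := ℝ) (φ := fun _ : Fin 3 => ℝ) 0).differentiableAt

lemma fderiv_eval0 {f : ℝ → ℝ} {p : Fin 3 → ℝ} (hf : DifferentiableAt ℝ f (p 0)) (v : Fin 3 → ℝ) :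
    fderiv ℝ (fun q : Fin 3 → ℝ => f (q 0)) p v = v 0 * deriv f (p 0) := by
  have hproj := (ContinuousLinearMap.proj (R := ℝ) (φ := fun _ : Fin 3 => ℝ) 0).differentiableAt (x := p)
  have h1 : fderiv ℝ (fun q : Fin 3 → ℝ => f (q 0)) p
      = (fderiv ℝ f (p 0)).comp (fderiv ℝ (fun q : Fin 3 → ℝ => q 0) p) :=
    fderiv_comp (g := f) (f := fun q : Fin 3 → ℝ => q 0) p hf hproj
  rw [h1]
  have h2 : fderiv ℝ (fun q : Fin 3 → ℝ => q 0) p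
      = ContinuousLinearMap.proj (R := ℝ) (φ := fun _ : Fin 3 => ℝ) 0 :=
    (ContinuousLinearMap.proj (R := ℝ) (φ := fun _ : Fin 3 => ℝ) 0).fderiv
  rw [h2]
  show fderiv ℝ f (p 0) (v 0) = v 0 * deriv f (p 0)
  rw [show (v 0 : ℝ) = (v 0) • (1 : ℝ) by simp, map_smul, fderiv_apply_one_eq_deriv]
  simp [smul_eq_mul]

lemma hD (h : ℝ → ℝ) (hh : ContDiff ℝ (⊤ : ℕ∞) h) (p : Fin 3 → ℝ) (i j k : Fin 3) :
    fderiv ℝ (fun q => gh h q j k) p (Pi.single i 1) =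
      if i = 0 ∧ j = 1 ∧ k = 1 then -2 * deriv h (p 0) else 0 := by
  have hd : DifferentiableAt ℝ h (p 0) := (hh.differentiable (by simp)).differentiableAt
  by_cases hjk : j = 1 ∧ k = 1
  · obtain ⟨rfl, rfl⟩ := hjk
    have hfun : (fun q : Fin 3 → ℝ => gh h q 1 1) = fun q => -2 * h (q 0) :=
      funext fun q => by simp [gh]
    rw [hfun, fderiv_const_mul (diff_eval0 hd)]
    simp [fderiv_eval0 hd, Pi.single_apply, eq_comm]
    split_ifs <;> ring
  · have hfun : (fun q : Fin 3 → ℝ => gh h q j k) = fun _ => gh h p j k := by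
      funext q
      simp only [gh]
      split_ifs with h1 h2 h3 <;> first | rfl | exact absurd h3 hjk
    rw [hfun, fderiv_const_apply]
    rw [if_neg fun hc => hjk ⟨hc.2.1, hc.2.2⟩]
    rfl

lemma gh_symm (h : ℝ → ℝ) (p : Fin 3 → ℝ) (i j : Fin 3) : gh h p i j = gh h p j i := by
  simp only [gh]
  split_ifs <;> first | rfl | tauto

/-- The lowered Christoffel symbols. -/
noncomputable def Alow (h : ℝ → ℝ) (Γ : (Fin 3 → ℝ) → Fin 3 → Fin 3 → Fin 3 → ℝ)
    (p : Fin 3 → ℝ) (i j k : Fin 3) : ℝ := ∑ l, Γ p i j l * gh h p l k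

lemma hAval (h : ℝ → ℝ) (hh : ContDiff ℝ (⊤ : ℕ∞) h)
    (Γ : (Fin 3 → ℝ) → Fin 3 → Fin 3 → Fin 3 → ℝ) (hΓ : IsLeviCivita (gh h) Γ)
    (p : Fin 3 → ℝ) (i j k : Fin 3) : Alow h Γ p i j k =
      (if (i = 0 ∧ j = 1 ∧ k = 1) ∨ (i = 1 ∧ j = 0 ∧ k = 1) then -deriv h (p 0)
       else if i = 1 ∧ j = 1 ∧ k = 0 then deriv h (p 0) else 0) := by
  obtain ⟨hsym, hkos⟩ := hΓ
  have hAsym : ∀ i j k, Alow h Γ p i j k = Alow h Γ p j i k := by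
    intro i j k
    exact Finset.sum_congr rfl fun l _ => by rw [hsym]
  have hKos : ∀ i j k, Alow h Γ p i j k + Alow h Γ p i k j =
      (if i = 0 ∧ j = 1 ∧ k = 1 then -2 * deriv h (p 0) else 0) := by
    intro i j k
    have e := hkos p i j k
    rw [hD h hh p i j k] at e
    calc Alow h Γ p i j k + Alow h Γ p i k j
        = (∑ l, Γ p i j l * gh h p l k) + ∑ l, Γ p i k l * gh h p j l := by
          simp only [Alow]
          exact congrArg _ (Finset.sum_congr rfl fun l _ => by rw [gh_symm])
      _ = _ := e.symm
  have e1 := hKos i j k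
  have e2 := hKos j i k
  have e3 := hKos k i j
  have s1 := hAsym i j k
  have s2 := hAsym i k j
  have s3 := hAsym j k i
  clear hsym hkos hAsym hKos
  fin_cases i <;> fin_cases j <;> fin_cases k <;> norm_num [Fin.ext_iff] at * <;> linarith

/-- The explicit Christoffel symbols of g_h. -/
noncomputable def Gexp (h : ℝ → ℝ) (p : Fin 3 → ℝ) (i j k : Fin 3) : ℝ :=
  if (i = 0 ∧ j = 1 ∧ k = 2) ∨ (i = 1 ∧ j = 0 ∧ k = 2) then -deriv h (p 0)
  else if i = 1 ∧ j = 1 ∧ k = 0 then deriv h (p 0) else 0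

lemma hGamma (h : ℝ → ℝ) (hh : ContDiff ℝ (⊤ : ℕ∞) h)
    (Γ : (Fin 3 → ℝ) → Fin 3 → Fin 3 → Fin 3 → ℝ) (hΓ : IsLeviCivita (gh h) Γ)
    (p : Fin 3 → ℝ) (i j k : Fin 3) : Γ p i j k = Gexp h p i j k := by
  have hA := hAval h hh Γ hΓ p
  have hg0 : ∀ i j, Alow h Γ p i j 0 = Γ p i j 0 := by
    intro i j; simp [Alow, Fin.sum_univ_three, gh]
  have hg2 : ∀ i j, Alow h Γ p i j 2 = Γ p i j 1 := by
    intro i j; simp [Alow, Fin.sum_univ_three, gh]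
  have hg1 : ∀ i j, Alow h Γ p i j 1 = Γ p i j 1 * (-2 * h (p 0)) + Γ p i j 2 := by
    intro i j; simp [Alow, Fin.sum_univ_three, gh]; try ring
  have k1 : ∀ i j, Γ p i j 1 = Alow h Γ p i j 2 := fun i j => (hg2 i j).symm
  have k0 : ∀ i j, Γ p i j 0 = Alow h Γ p i j 0 := fun i j => (hg0 i j).symm
  have k2 : ∀ i j, Γ p i j 2 = Alow h Γ p i j 1 + 2 * h (p 0) * Alow h Γ p i j 2 := by
    intro i j
    have e := hg1 i j
    rw [k1 i j] at e
    linarith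
  clear hg0 hg1 hg2
  fin_cases i <;> fin_cases j <;> fin_cases k <;>
    simp_all [Gexp] <;> linarith

/-- Coefficients of the Christoffel symbols relative to h'. -/
noncomputable def Cco (i j k : Fin 3) : ℝ :=
  if (i = 0 ∧ j = 1 ∧ k = 2) ∨ (i = 1 ∧ j = 0 ∧ k = 2) then -1
  else if i = 1 ∧ j = 1 ∧ k = 0 then 1 else 0

/-- Coefficients of the curvature tensor relative to h''. -/
noncomputable def eps (i j k l : Fin 3) : ℝ :=
  if (i = 0 ∧ j = 1 ∧ k = 1 ∧ l = 0) ∨ (i = 1 ∧ j = 0 ∧ k = 0 ∧ l = 1) then 1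
  else if (i = 0 ∧ j = 1 ∧ k = 0 ∧ l = 1) ∨ (i = 1 ∧ j = 0 ∧ k = 1 ∧ l = 0) then -1 else 0

lemma fderivGamma (h : ℝ → ℝ) (hh : ContDiff ℝ (⊤ : ℕ∞) h)
    (Γ : (Fin 3 → ℝ) → Fin 3 → Fin 3 → Fin 3 → ℝ) (hΓ : IsLeviCivita (gh h) Γ)
    (p : Fin 3 → ℝ) (i j k m : Fin 3) :
    fderiv ℝ (fun q => Γ q j k m) p (Pi.single i 1) =
      (if i = 0 then 1 else 0) * (Cco j k m * deriv (deriv h) (p 0)) := by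
  have hd' : DifferentiableAt ℝ (deriv h) (p 0) := by
    have hh1 : ContDiff ℝ (↑(⊤:ℕ∞)) h := hh.of_le (by simp)
    have h2 := (contDiff_infty_iff_deriv.mp hh1).2
    exact (h2.differentiable (by simp)).differentiableAt
  have hfun : (fun q => Γ q j k m) = fun q : Fin 3 → ℝ => Cco j k m * deriv h (q 0) := by
    funext q
    rw [hGamma h hh Γ hΓ q j k m]
    simp only [Gexp, Cco]
    split_ifs <;> ring
  rw [hfun, fderiv_const_mul (diff_eval0 hd')]
  simp [fderiv_eval0 hd', Pi.single_apply, eq_comm]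

set_option maxHeartbeats 2000000 in
lemma hRiem (h : ℝ → ℝ) (hh : ContDiff ℝ (⊤ : ℕ∞) h)
    (Γ : (Fin 3 → ℝ) → Fin 3 → Fin 3 → Fin 3 → ℝ) (hΓ : IsLeviCivita (gh h) Γ)
    (p : Fin 3 → ℝ) (i j k l : Fin 3) :
    Riem (gh h) Γ p i j k l = eps i j k l * deriv (deriv h) (p 0) := by
  simp only [Riem, fderivGamma h hh Γ hΓ]
  simp only [hGamma h hh Γ hΓ, Fin.sum_univ_three]
  fin_cases i <;> fin_cases j <;> fin_cases k <;> fin_cases l <;>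
    norm_num [Gexp, Cco, eps, gh, Fin.ext_iff] <;> ring

set_option maxHeartbeats 2000000 in
lemma hNR (h : ℝ → ℝ) (hh : ContDiff ℝ (⊤ : ℕ∞) h)
    (Γ : (Fin 3 → ℝ) → Fin 3 → Fin 3 → Fin 3 → ℝ) (hΓ : IsLeviCivita (gh h) Γ)
    (p : Fin 3 → ℝ) (idx : Fin 5 → Fin 3) :
    nablaR (gh h) Γ 1 p idx =
      (if idx 4 = 0 then 1 else 0) * eps (idx 0) (idx 1) (idx 2) (idx 3)
        * deriv (deriv (deriv h)) (p 0) := by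
  have hd'' : DifferentiableAt ℝ (deriv (deriv h)) (p 0) := by
    have hh1 : ContDiff ℝ (↑(⊤:ℕ∞)) h := hh.of_le (by simp)
    have h2 := (contDiff_infty_iff_deriv.mp hh1).2
    have h3 := (contDiff_infty_iff_deriv.mp h2).2
    exact (h3.differentiable (by simp)).differentiableAt
  show covDer Γ (nablaR (gh h) Γ 0) p idx = _
  rw [covDer]
  have hfun : (fun q => nablaR (gh h) Γ 0 q (fun a => idx a.castSucc))
      = fun q : Fin 3 → ℝ =>
        eps (idx 0) (idx 1) (idx 2) (idx 3) * deriv (deriv h) (q 0) := by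
    funext q
    show Riem (gh h) Γ q _ _ _ _ = _
    rw [hRiem h hh Γ hΓ]
    rfl
  rw [hfun, fderiv_const_mul (diff_eval0 hd''), ContinuousLinearMap.smul_apply,
    fderiv_eval0 hd'']
  show _ - (∑ a : Fin 4, ∑ n : Fin 3, _) = _
  have c0 : (Fin.castSucc (0 : Fin 4)) = (0 : Fin 5) := rfl
  have c1 : (Fin.castSucc (1 : Fin 4)) = (1 : Fin 5) := rfl
  have c2 : (Fin.castSucc (2 : Fin 4)) = (2 : Fin 5) := rfl
  have c3 : (Fin.castSucc (3 : Fin 4)) = (3 : Fin 5) := rfl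
  have c4 : (Fin.last (4 + 0)) = (4 : Fin 5) := rfl
  have f1 : ((1:Fin 4) = 0) = False := by decide
  have f2 : ((2:Fin 4) = 0) = False := by decide
  have f3 : ((3:Fin 4) = 0) = False := by decide
  have f4 : ((0:Fin 4) = 1) = False := by decide
  have f5 : ((2:Fin 4) = 1) = False := by decide
  have f6 : ((3:Fin 4) = 1) = False := by decide
  have f7 : ((0:Fin 4) = 2) = False := by decide
  have f8 : ((1:Fin 4) = 2) = False := by decide
  have f9 : ((3:Fin 4) = 2) = False := by decide
  have f10 : ((0:Fin 4) = 3) = False := by decide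
  have f11 : ((1:Fin 4) = 3) = False := by decide
  have f12 : ((2:Fin 4) = 3) = False := by decide
  simp only [nablaR, Fin.sum_univ_four, Fin.sum_univ_three,
    hGamma h hh Γ hΓ, hRiem h hh Γ hΓ, Function.update, c0, c1, c2, c3, c4,
    f1, f2, f3, f4, f5, f6, f7, f8, f9, f10, f11, f12,
    dite_true, dite_false, Pi.single_apply, smul_eq_mul]
  generalize idx 0 = a
  generalize idx 1 = b
  generalize idx 2 = c
  generalize idx 3 = d
  generalize idx 4 = e
  fin_cases a <;> fin_cases b <;> fin_cases c <;> fin_cases d <;> fin_cases e <;>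
    norm_num [eps, Gexp, Fin.ext_iff] <;> ring

/-- ∇R(∂t,∂x,∂x,∂t;∂t) = h'''(t), and up to the usual symmetries
this is the only nonzero entry of ∇R on coordinate frames. -/
theorem stmt9 (h : ℝ → ℝ) (hh : ContDiff ℝ (⊤ : ℕ∞) h)
    (Γ : (Fin 3 → ℝ) → Fin 3 → Fin 3 → Fin 3 → ℝ)
    (hΓ : IsLeviCivita (gh h) Γ) :
    ∀ p : Fin 3 → ℝ,
      nablaR (gh h) Γ 1 p ![0, 1, 1, 0, 0] = deriv^[3] h (p 0) ∧
      ∀ idx : Fin (4 + 1) → Fin 3,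
        ¬(((idx 0 = 0 ∧ idx 1 = 1 ∧ idx 2 = 1 ∧ idx 3 = 0) ∨
           (idx 0 = 1 ∧ idx 1 = 0 ∧ idx 2 = 0 ∧ idx 3 = 1) ∨
           (idx 0 = 0 ∧ idx 1 = 1 ∧ idx 2 = 0 ∧ idx 3 = 1) ∨
           (idx 0 = 1 ∧ idx 1 = 0 ∧ idx 2 = 1 ∧ idx 3 = 0)) ∧
          idx 4 = 0) →
        nablaR (gh h) Γ 1 p idx = 0 := by
  have hit : ∀ x : ℝ, deriv^[3] h x = deriv (deriv (deriv h)) x := by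
    intro x
    simp [Function.iterate_succ_apply', Function.iterate_zero_apply]
  intro p
  constructor
  · rw [hNR h hh Γ hΓ p, hit]
    norm_num [eps]
    simp (config := { decide := true })
  · intro idx hnot
    rw [hNR h hh Γ hΓ p idx]
    simp only [eps]
    by_cases he : idx 4 = 0
    · rw [if_pos he]
      split_ifs with h1 h2
      · rcases h1 with h1 | h1
        · exact absurd ⟨Or.inl h1, he⟩ hnot
        · exact absurd ⟨Or.inr (Or.inl h1), he⟩ hnot
      · rcases h2 with h2 | h2
        · exact absurd ⟨Or.inr (Or.inr (Or.inl h2)), he⟩ hnot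
        · exact absurd ⟨Or.inr (Or.inr (Or.inr h2)), he⟩ hnot
      · ring
    · rw [if_neg he]
      ring
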